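/- arXiv:2102.00978 — 5 statements merged into one kernel-verified Lean document; each statement's English description precedes it below -/
import Mathlib

section
/- For every positive integer n ≥ 2, the number of ordered factorizations of n into pairwise coprime integers greater than 1 equals the ordered Bell number (Fubini number) a_{ω(n)}, the number of ordered set partitions of a set with ω(n) elements. -/
open Real Finset Filter

/-- Number of unordered factorizations of `n` into parts `> 1`. -/
noncomputable def littlef (n : ℕ) : ℕ :=
  Nat.card {s : Multiset ℕ // s.prod = n ∧ ∀ a ∈ s, 1 < a}

/-- Number of unordered factorizations of `n` into pairwise coprime parts `> 1`. -/
noncomputable def bigF (n : ℕ) : ℕ :=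
  Nat.card {s : Multiset ℕ // s.prod = n ∧ (∀ a ∈ s, 1 < a) ∧ s.Pairwise Nat.Coprime}

/-- Number of ordered factorizations of `n` into parts `> 1`. -/
noncomputable def littleg (n : ℕ) : ℕ :=
  Nat.card {l : List ℕ // l.prod = n ∧ ∀ a ∈ l, 1 < a}

/-- Number of ordered factorizations of `n` into pairwise coprime parts `> 1`. -/
noncomputable def bigG (n : ℕ) : ℕ :=
  Nat.card {l : List ℕ // l.prod = n ∧ (∀ a ∈ l, 1 < a) ∧ l.Pairwise Nat.Coprime}

/-- The `k`-th Bell number: the number of set partitions of a `k`-element set. -/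
noncomputable def bell (k : ℕ) : ℕ :=
  Nat.card (Finpartition (Finset.univ : Finset (Fin k)))

/-- The `k`-th ordered Bell (Fubini) number: the number of ordered set partitions
of a `k`-element set, i.e. lists of pairwise disjoint nonempty blocks covering it. -/
noncomputable def fubini (k : ℕ) : ℕ :=
  Nat.card {l : List (Finset (Fin k)) //
    (∀ s ∈ l, s.Nonempty) ∧ l.Pairwise Disjoint ∧ l.foldr (· ∪ ·) ∅ = Finset.univ}

/-- `ω n`: the number of distinct prime factors of `n`. -/
def omegaN (n : ℕ) : ℕ := n.primeFactors.card

/-- `π(x, k)`: the number of `2 ≤ n ≤ x` with exactly `k` distinct prime factors. -/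
noncomputable def piOmega (x : ℝ) (k : ℕ) : ℕ :=
  Nat.card {n : ℕ // 2 ≤ n ∧ (n : ℝ) ≤ x ∧ omegaN n = k}

/-- `L(x) = exp(log x · log log log x / log log x)`. -/
noncomputable def Lfun (x : ℝ) : ℝ :=
  Real.exp (Real.log x * Real.log (Real.log (Real.log x)) / Real.log (Real.log x))

/-! A coprime factorization `n = a₁ ⋯ aₗ` is determined by the sets of primes dividing each part:
the prime-factor sets of the parts form an ordered partition of the primes of `n`, and conversely
a block `S` of such a partition gives back the part `∏ p ∈ S, p ^ vₚ(n)`. -/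

namespace List

variable {α : Type*}

theorem map_map_eq_self {β : Type*} {f : α → β} {g : β → α} {l : List α}
    (h : ∀ x ∈ l, g (f x) = x) : (l.map f).map g = l := by
  rw [map_map]
  exact (map_congr_left h).trans l.map_id

variable [DecidableEq α]

theorem mem_foldr_union {l : List (Finset α)} {x : α} :
    x ∈ l.foldr (· ∪ ·) ∅ ↔ ∃ t ∈ l, x ∈ t := by
  induction l with
  | nil => simp
  | cons t l ih => simp [ih]

theorem foldr_union_map_finsetMap {β : Type*} [DecidableEq β] (f : α ↪ β)
    (l : List (Finset α)) :
    (l.map (Finset.map f)).foldr (· ∪ ·) ∅ = (l.foldr (· ∪ ·) ∅).map f := by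
  induction l with
  | nil => rfl
  | cons t l ih => simp [ih, Finset.map_union]

end List

theorem Finset.prod_foldr_union {α M : Type*} [DecidableEq α] [CommMonoid M] (g : α → M)
    {l : List (Finset α)} (hl : l.Pairwise Disjoint) :
    ∏ x ∈ l.foldr (· ∪ ·) ∅, g x = (l.map fun t => ∏ x ∈ t, g x).prod := by
  induction l with
  | nil => simp
  | cons t l ih =>
    rw [List.pairwise_cons] at hl
    have hdisj : Disjoint t (l.foldr (· ∪ ·) ∅) := disjoint_left.2 fun x hxt hx => by
      obtain ⟨u, hu, hxu⟩ := List.mem_foldr_union.1 hx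
      exact disjoint_left.1 (hl.1 u hu) hxt hxu
    rw [List.foldr_cons, prod_union hdisj, ih hl.2, List.map_cons, List.prod_cons]

section OrderedPartition

variable {α β : Type*}

theorem Finset.map_preimage_of_subset_map {f : α ↪ β} {s : Finset α} {t : Finset β}
    (h : t ⊆ s.map f) : (t.preimage f f.injective.injOn).map f = t := by
  obtain ⟨u, -, rfl⟩ := subset_map_iff.1 h
  rw [preimage_map]

variable [DecidableEq α]

def IsOrderedPartition (s : Finset α) (l : List (Finset α)) : Prop :=
  (∀ t ∈ l, t.Nonempty) ∧ l.Pairwise Disjoint ∧ l.foldr (· ∪ ·) ∅ = s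

theorem IsOrderedPartition.subset_of_mem {s t : Finset α} {l : List (Finset α)}
    (h : IsOrderedPartition s l) (ht : t ∈ l) : t ⊆ s :=
  fun _ hx => h.2.2 ▸ List.mem_foldr_union.2 ⟨t, ht, hx⟩

theorem IsOrderedPartition.map_preimage {γ : Type*} {f : γ ↪ α} {s : Finset γ}
    {l : List (Finset α)} (h : IsOrderedPartition (s.map f) l) :
    (l.map fun t => t.preimage f f.injective.injOn).map (Finset.map f) = l :=
  List.map_map_eq_self fun _ ht => Finset.map_preimage_of_subset_map (h.subset_of_mem ht)

variable [DecidableEq β]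

theorem isOrderedPartition_map_iff (f : α ↪ β) {s : Finset α} {l : List (Finset α)} :
    IsOrderedPartition (s.map f) (l.map (Finset.map f)) ↔ IsOrderedPartition s l := by
  simp only [IsOrderedPartition, List.forall_mem_map, map_nonempty, List.pairwise_map,
    Finset.disjoint_map, List.foldr_union_map_finsetMap, Finset.map_inj]

noncomputable def orderedPartitionsEquivOfEmbedding (f : α ↪ β) (s : Finset α) :
    {l // IsOrderedPartition s l} ≃ {l // IsOrderedPartition (s.map f) l} where
  toFun l := ⟨l.1.map (Finset.map f), (isOrderedPartition_map_iff f).2 l.2⟩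
  invFun l := ⟨l.1.map fun t => t.preimage f f.injective.injOn,
    (isOrderedPartition_map_iff f).1 (l.2.map_preimage.symm ▸ l.2)⟩
  left_inv _ := Subtype.ext <| List.map_map_eq_self fun t _ => preimage_map f t
  right_inv l := Subtype.ext l.2.map_preimage

end OrderedPartition

namespace Nat

def IsCoprimeFactorization (n : ℕ) (l : List ℕ) : Prop :=
  l.prod = n ∧ (∀ a ∈ l, 1 < a) ∧ l.Pairwise Coprime

def ordProjOn (S : Finset ℕ) (n : ℕ) : ℕ := ∏ p ∈ S, ordProj[p] n

theorem ordProjOn_pos (S : Finset ℕ) (n : ℕ) : 0 < ordProjOn S n :=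
  prod_pos fun p _ => ordProj_pos n p

theorem primeFactors_ordProjOn {S : Finset ℕ} {n : ℕ} (hS : S ⊆ n.primeFactors) :
    (ordProjOn S n).primeFactors = S := by
  induction S using Finset.induction_on with
  | empty => simp [ordProjOn]
  | insert p S hp ih =>
    have hpn := hS (mem_insert_self p S)
    have hinsert : ordProjOn (insert p S) n = ordProj[p] n * ordProjOn S n := prod_insert hp
    rw [hinsert, primeFactors_mul (ordProj_pos n p).ne' (ordProjOn_pos S n).ne',
      primeFactors_prime_pow (Finsupp.mem_support_iff.1 hpn) (prime_of_mem_primeFactors hpn),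
      ih ((subset_insert p S).trans hS), insert_eq]

theorem ordProjOn_primeFactors_of_coprime {a b : ℕ} (ha : a ≠ 0) (hab : Coprime a b) :
    ordProjOn a.primeFactors (a * b) = a := by
  conv_rhs => rw [prod_primeFactors_pow_factorization ha]
  refine prod_congr rfl fun p hp => ?_
  have hpb : b.factorization p = 0 :=
    Finsupp.notMem_support_iff.1 (disjoint_left.1 hab.disjoint_primeFactors hp)
  rw [factorization_mul_of_coprime hab, Finsupp.add_apply, hpb, add_zero]

theorem primeFactors_list_prod {l : List ℕ} (hl : 0 ∉ l) :
    l.prod.primeFactors = (l.map primeFactors).foldr (· ∪ ·) ∅ := by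
  induction l with
  | nil => simp
  | cons a l ih =>
    rw [List.mem_cons, not_or] at hl
    rw [List.prod_cons, primeFactors_mul (Ne.symm hl.1) (List.prod_ne_zero hl.2), ih hl.2]
    rfl

theorem coprime_prod_erase_of_mem {l : List ℕ} (hl : l.Pairwise Coprime) {a : ℕ}
    (ha : a ∈ l) :
    Coprime a (l.erase a).prod :=
  coprime_list_prod_right_iff.2 <|
    List.pairwise_cons.1 (hl.perm (List.perm_cons_erase ha) Coprime.symm) |>.1

namespace IsCoprimeFactorization

variable {n : ℕ} {l : List ℕ}

theorem isOrderedPartition_map_primeFactors (h : IsCoprimeFactorization n l) :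
    IsOrderedPartition n.primeFactors (l.map primeFactors) := by
  obtain ⟨hprod, hlt, hcop⟩ := h
  refine ⟨?_, hcop.map _ fun a b hab => hab.disjoint_primeFactors, ?_⟩
  · simpa only [List.forall_mem_map, nonempty_primeFactors] using hlt
  · rw [← primeFactors_list_prod fun h0 => Nat.not_lt_zero 1 (hlt 0 h0), hprod]

theorem ordProjOn_primeFactors_of_mem (h : IsCoprimeFactorization n l) {a : ℕ} (ha : a ∈ l) :
    ordProjOn a.primeFactors n = a := by
  obtain ⟨hprod, hlt, hcop⟩ := h
  rw [← hprod, ← List.prod_erase ha]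
  exact ordProjOn_primeFactors_of_coprime (Nat.ne_zero_of_lt (hlt a ha))
    (coprime_prod_erase_of_mem hcop ha)

end IsCoprimeFactorization

theorem _root_.IsOrderedPartition.isCoprimeFactorization_map_ordProjOn {n : ℕ} (hn : n ≠ 0)
    {L : List (Finset ℕ)} (h : IsOrderedPartition n.primeFactors L) :
    IsCoprimeFactorization n (L.map (ordProjOn · n)) := by
  have hpf {S} (hS : S ∈ L) := primeFactors_ordProjOn (h.subset_of_mem hS)
  refine ⟨?_, ?_, ?_⟩
  · change (L.map fun S => ∏ p ∈ S, ordProj[p] n).prod = n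
    rw [← prod_foldr_union _ h.2.1, h.2.2, ← prod_primeFactors_pow_factorization hn]
  · refine List.forall_mem_map.2 fun S hS => ?_
    rw [← nonempty_primeFactors, hpf hS]
    exact h.1 S hS
  · rw [List.pairwise_map]
    refine h.2.1.imp_of_mem fun hS hT hST => ?_
    rwa [← disjoint_primeFactors (ordProjOn_pos _ n).ne' (ordProjOn_pos _ n).ne', hpf hS, hpf hT]

noncomputable def coprimeFactorizationsEquiv {n : ℕ} (hn : n ≠ 0) :
    {l // IsCoprimeFactorization n l} ≃ {L // IsOrderedPartition n.primeFactors L} where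
  toFun l := ⟨l.1.map primeFactors, l.2.isOrderedPartition_map_primeFactors⟩
  invFun L := ⟨L.1.map (ordProjOn · n), L.2.isCoprimeFactorization_map_ordProjOn hn⟩
  left_inv l := Subtype.ext <|
    List.map_map_eq_self fun _ ha => l.2.ordProjOn_primeFactors_of_mem ha
  right_inv L := Subtype.ext <|
    List.map_map_eq_self fun _ hS => primeFactors_ordProjOn (L.2.subset_of_mem hS)

end Nat

theorem ordered_coprime_factorizations_eq_fubini (n : ℕ) (hn : 2 ≤ n) :
    bigG n = fubini (omegaN n) := by
  let f := (n.primeFactors.orderEmbOfFin (k := omegaN n) rfl).toEmbedding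
  have hf : univ.map f = n.primeFactors := Finset.map_orderEmbOfFin_univ _ _
  have e := orderedPartitionsEquivOfEmbedding f univ
  rw [hf] at e
  exact Nat.card_congr ((Nat.coprimeFactorizationsEquiv (by omega)).trans e.symm)
end

section
/- The maximum value of ω(n) over n ≤ x is asymptotically (log x)/(log log x); more precisely, max_{n ≤ x} ω(n) = (log x / log log x)(1 + O(1/log log x)) as x → ∞. -/
open Real Finset Filter

/-!
For `y = log x` and `n ≤ x`, summing `log y ≤ log q + max (log y - log q) 0` over the prime
factors `q` of `n` gives
`ω(n) log y ≤ log n + ∑_{p ≤ y} (log y - log p) = log n + π(y) log y - θ(y)`,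
and `π(y) log y - θ(y) = O(y / log y)` by Chebyshev's bounds; dividing by `log log x` gives the
upper bound. For the lower bound take the primorial `N#` with `θ(N) ≤ log x < θ(N + 1)`:
since `θ(N) ≫ N` we have `N = O(log x)`, and
`π(N) log N ≥ θ(N + 1) - log (N + 1) > log x - log (N + 1)`.
-/

open Asymptotics Chebyshev
open scoped Nat.Prime

theorem exists_apply_le_and_lt_apply_succ {α : Type*} [LinearOrder α] {f : ℕ → α} {a : α}
    (h0 : f 0 ≤ a) (h : ∃ k, a < f k) : ∃ n, f n ≤ a ∧ a < f (n + 1) := by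
  classical
  obtain ⟨n, hn⟩ : ∃ n, Nat.find h = n + 1 :=
    Nat.exists_eq_succ_of_ne_zero fun h' ↦ (h0.trans_lt (h' ▸ Nat.find_spec h)).false
  exact ⟨n, not_lt.1 (Nat.find_min h (by omega)), hn ▸ Nat.find_spec h⟩

theorem div_log_mul_one_sub_le {L k : ℝ} (hl : 0 < log L) (hlL : log L ^ 2 ≤ L)
    (hk : L - log L - 2 ≤ k * (log L + 1)) : L / log L * (1 - 2 / log L) ≤ k := by
  set l := log L
  have hcubic : (L * l - 2 * L) * (l + 1) ≤ k * l ^ 2 * (l + 1) := by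
    nlinarith [mul_le_mul_of_nonneg_left hk (sq_nonneg l), mul_nonneg (by linarith : 0 ≤ l + 2)
      (sub_nonneg.2 hlL)]
  rw [show L / l * (1 - 2 / l) = (L * l - 2 * L) / l ^ 2 by field_simp,
    div_le_iff₀ (by positivity)]
  exact le_of_mul_le_mul_right hcubic (by linarith)

namespace Chebyshev

theorem theta_natCast_add_one_le (n : ℕ) : θ ((n + 1 : ℕ) : ℝ) ≤ θ n + log (n + 1) := by
  rw [theta_eq_sum_primesLE_log, theta_eq_sum_primesLE_log, Nat.primesLE_succ]
  split_ifs
  · rw [sum_insert (Nat.notMem_primesLE n)]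
    push_cast
    linarith
  · linarith [log_nonneg (by linarith [n.cast_nonneg (α := ℝ)] : (1 : ℝ) ≤ n + 1)]

theorem primeCounting_mul_log_sub_theta (y : ℝ) :
    π ⌊y⌋₊ * log y - θ y = ∑ p ∈ Nat.primesLE ⌊y⌋₊, (log y - log p) := by
  rw [sum_sub_distrib, sum_const, Nat.primesLE_card_eq_primeCounting, nsmul_eq_mul,
    theta_eq_sum_primesLE]

theorem primeCounting_mul_log_sub_theta_isBigO :
    (fun y ↦ π ⌊y⌋₊ * log y - θ y) =O[atTop] (fun y ↦ y / log y) := by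
  refine ((isBigO_refl log atTop).mul primeCounting_sub_theta_div_log_isBigO).congr' ?_ ?_ <;>
    filter_upwards [eventually_gt_atTop 1] with y hy <;> field_simp [(log_pos hy).ne']

theorem eventually_le_two_mul_theta : ∀ᶠ x : ℝ in atTop, x ≤ 2 * θ x := by
  have hsqrt : (fun x ↦ √x * log x) =o[atTop] id := by
    have hlog : log =o[atTop] sqrt := by
      convert isLittleO_log_rpow_atTop one_half_pos using 2 with x
      exact sqrt_eq_rpow x
    refine ((isBigO_refl sqrt atTop).mul_isLittleO hlog).congr' EventuallyEq.rfl ?_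
    filter_upwards [eventually_ge_atTop 0] with x hx using mul_self_sqrt hx
  have hshift : (fun x ↦ log (x + 2)) =o[atTop] id :=
    (isLittleO_log_id_atTop.comp_tendsto (tendsto_atTop_add_const_right _ 2 tendsto_id))
      |>.trans_isBigO ((isBigO_refl id atTop).add (isLittleO_const_id_atTop 2).isBigO)
  have herr := ((isLittleO_const_id_atTop (log 2)).add hshift).add (hsqrt.const_mul_left 2)
  filter_upwards [herr.bound (by norm_num : (0 : ℝ) < 1 / 8), eventually_ge_atTop 1] with x hx h1
  have hθ := theta_ge' h1
  have hlog2 : 0.69 * x ≤ log 2 * x := by nlinarith [log_two_gt_d9]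
  simp only [norm_eq_abs, id, abs_of_nonneg (by linarith : (0 : ℝ) ≤ x)] at hx
  linarith [le_abs_self (log 2 + log (x + 2) + 2 * (√x * log x))]

theorem exists_theta_le_and_lt_theta_succ {L : ℝ} (hL : 0 ≤ L) :
    ∃ N : ℕ, θ N ≤ L ∧ L < θ ((N + 1 : ℕ) : ℝ) := by
  refine exists_apply_le_and_lt_apply_succ (f := fun n : ℕ ↦ θ n) (by simpa using hL) ?_
  obtain ⟨k, hk, hkL⟩ :=
    ((tendsto_natCast_atTop_atTop.eventually eventually_le_two_mul_theta).and
      (tendsto_natCast_atTop_atTop.eventually_gt_atTop (2 * L))).exists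
  exact ⟨k, by linarith⟩

theorem sub_log_sub_two_le_primeCounting_mul {N : ℕ} {L : ℝ} (hN : 0 < N)
    (hNL : (N : ℝ) ≤ 2 * L) (hLθ : L < θ ((N + 1 : ℕ) : ℝ)) :
    L - log L - 2 ≤ π N * (log L + 1) := by
  have hN1 : (1 : ℝ) ≤ N := mod_cast hN
  have hL : 0 < L := by linarith
  have hlogN : log N ≤ log L + 1 := by
    grw [hNL, log_mul two_ne_zero hL.ne']
    linarith [log_two_lt_d9]
  have hlogN1 : log (N + 1) ≤ log L + 2 := by
    grw [show (N : ℝ) + 1 ≤ 4 * L by linarith, log_mul four_ne_zero hL.ne', log_four_eq]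
    linarith [log_two_lt_d9]
  grw [← hlogN]
  linarith [theta_natCast_add_one_le N, theta_le_pi_mul_log N]

end Chebyshev

theorem card_primeFactors_mul_log_le {n : ℕ} (hn : n ≠ 0) {y : ℝ} (hy : 0 < y) :
    #n.primeFactors * log y ≤ log n + (π ⌊y⌋₊ * log y - θ y) := by
  rw [primeCounting_mul_log_sub_theta]
  set P := n.primeFactors
  have hpos : ∀ q ∈ P, 0 < q := fun q hq ↦ (Nat.prime_of_mem_primeFactors hq).pos
  have hsum_log : ∑ q ∈ P, log (q : ℝ) ≤ log n := by
    rw [← log_prod fun q hq ↦ mod_cast (hpos q hq).ne', ← Nat.cast_prod]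
    exact log_le_log (mod_cast prod_pos hpos) <| mod_cast Nat.le_of_dvd (Nat.pos_of_ne_zero hn)
      (Nat.prod_primeFactors_dvd n)
  have hdeficit :
      ∑ q ∈ P, (log y - log q) ≤ ∑ p ∈ Nat.primesLE ⌊y⌋₊, (log y - log p) := by
    have hlarge : ∑ q ∈ P with ¬ q ≤ ⌊y⌋₊, (log y - log q) ≤ 0 := by
      refine sum_nonpos fun q hq ↦ ?_
      rw [mem_filter, not_le] at hq
      linarith [log_lt_log hy (Nat.lt_of_floor_lt hq.2)]
    calc ∑ q ∈ P, (log y - log q) ≤ ∑ q ∈ P with q ≤ ⌊y⌋₊, (log y - log q) := by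
          linarith [sum_filter_add_sum_filter_not P (· ≤ ⌊y⌋₊) (fun q ↦ log y - log q)]
      _ ≤ ∑ p ∈ Nat.primesLE ⌊y⌋₊, (log y - log p) := by
          refine sum_le_sum_of_subset_of_nonneg (fun q hq ↦ ?_) fun p hp _ ↦ ?_
          · rw [mem_filter] at hq
            exact Nat.mem_primesLE.2 ⟨hq.2, Nat.prime_of_mem_primeFactors hq.1⟩
          · have hp := Nat.mem_primesLE.1 hp
            exact sub_nonneg.2 <| log_le_log (mod_cast hp.2.pos) (Nat.le_floor_iff hy.le |>.1 hp.1)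
  calc (#P : ℝ) * log y = ∑ q ∈ P, log (q : ℝ) + ∑ q ∈ P, (log y - log q) := by
        rw [sum_sub_distrib, sum_const, nsmul_eq_mul]
        ring
    _ ≤ _ := add_le_add hsum_log hdeficit

theorem exists_eventually_card_primeFactors_le : ∃ c : ℝ, ∀ᶠ x : ℝ in atTop,
    ∀ n : ℕ, n ≠ 0 → (n : ℝ) ≤ x →
      (#n.primeFactors : ℝ) ≤ log x / log (log x) * (1 + c / log (log x)) := by
  obtain ⟨c, hc⟩ := primeCounting_mul_log_sub_theta_isBigO.bound
  refine ⟨c, ?_⟩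
  filter_upwards [tendsto_log_atTop.eventually hc,
    tendsto_log_atTop.eventually_gt_atTop 0,
    tendsto_log_atTop.eventually (tendsto_log_atTop.eventually_gt_atTop 0)]
    with x hdef hL hl n hn hnx
  set L := log x
  rw [norm_of_nonneg (div_pos hL hl).le] at hdef
  have hnL : log n ≤ L := log_le_log (mod_cast Nat.pos_of_ne_zero hn) hnx
  rw [show L / log L * (1 + c / log L) = (L + c * (L / log L)) / log L by field_simp,
    le_div_iff₀ hl]
  linarith [card_primeFactors_mul_log_le hn hL, le_norm_self (π ⌊L⌋₊ * log L - θ L)]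

theorem eventually_exists_card_primeFactors_ge : ∀ᶠ x : ℝ in atTop,
    ∃ n : ℕ, 2 ≤ n ∧ (n : ℝ) ≤ x ∧
      log x / log (log x) * (1 - 2 / log (log x)) ≤ #n.primeFactors := by
  obtain ⟨N₀, hN₀⟩ := eventually_atTop.1
    (tendsto_natCast_atTop_atTop.eventually eventually_le_two_mul_theta)
  have hsq : ∀ᶠ t : ℝ in atTop, log t ^ 2 ≤ t := by
    filter_upwards [(isLittleO_pow_log_id_atTop (n := 2)).bound one_pos,
      eventually_ge_atTop 0] with t ht ht0
    simpa [abs_of_nonneg ht0] using ht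
  filter_upwards [tendsto_log_atTop.eventually (eventually_ge_atTop (2 * (N₀ + 3 : ℝ))),
    tendsto_log_atTop.eventually hsq, eventually_gt_atTop 0] with x hLN₀ hlL hx
  set L := log x
  have hl : 0 < log L := log_pos (by linarith)
  obtain ⟨N, hNL, hLN⟩ := exists_theta_le_and_lt_theta_succ (L := L) (by linarith)
  have hN : N₀ + 2 ≤ N := by
    have := theta_le_log4_mul_x (x := ((N + 1 : ℕ) : ℝ)) (by positivity)
    have : (N₀ + 2 : ℝ) < N + 1 := by
      push_cast at *
      nlinarith [log_four_eq, log_two_lt_d9]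
    exact Nat.lt_succ_iff.1 (by exact_mod_cast this)
  have hN2L : (N : ℝ) ≤ 2 * L := (hN₀ N (by omega)).trans (by linarith)
  refine ⟨primorial N, primorial_two ▸ primorial_mono (by omega), ?_, ?_⟩
  · have := theta_eq_log_primorial N
    rw [Nat.floor_natCast] at this
    exact (log_le_log_iff (mod_cast primorial_pos N) hx).1 (this ▸ hNL)
  · rw [primeFactors_primorial, Nat.primesLE_card_eq_primeCounting]
    exact div_log_mul_one_sub_le hl hlL <|
      sub_log_sub_two_le_primeCounting_mul (by omega) hN2L hLN

theorem max_omega_asymptotic :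
    ∃ C : ℝ, 0 < C ∧ ∃ X : ℝ, ∀ x : ℝ, X ≤ x →
      (∀ n : ℕ, 2 ≤ n → (n : ℝ) ≤ x →
        (omegaN n : ℝ) ≤ Real.log x / Real.log (Real.log x) * (1 + C / Real.log (Real.log x))) ∧
      (∃ n : ℕ, 2 ≤ n ∧ (n : ℝ) ≤ x ∧
        Real.log x / Real.log (Real.log x) * (1 - C / Real.log (Real.log x)) ≤ (omegaN n : ℝ)) := by
  obtain ⟨c, hupper⟩ := exists_eventually_card_primeFactors_le
  obtain ⟨X, hX⟩ := eventually_atTop.1 <| hupper.and <|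
    eventually_exists_card_primeFactors_ge.and <| (tendsto_log_atTop.eventually_gt_atTop 0).and
      (tendsto_log_atTop.eventually (tendsto_log_atTop.eventually_gt_atTop 0))
  refine ⟨max c 2, by positivity, X, fun x hx ↦ ?_⟩
  obtain ⟨hle, ⟨n, hn, hnx, hge⟩, hL, hl⟩ := hX x hx
  refine ⟨fun m hm hmx ↦ (hle m (by omega) hmx).trans ?_, ⟨n, hn, hnx, le_trans ?_ hge⟩⟩
  all_goals gcongr
  exacts [le_max_left c 2, le_max_right c 2]
end

section
/- The Lambert W function satisfies W(k) = log k − log log k + o(1) as k → ∞. -/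
open Real Finset Filter

/-! Taking logarithms in `w e^w = x` gives `log x = w + log w`. Since `log w ≤ w`, this forces
`w ≥ (log x) / 2`, so `W → ∞`; and `log log x - log w = log (1 + log w / w) → 0`. -/

section MulExpEq

variable {w x : ℝ}

theorem log_eq_add_log_of_mul_exp_eq (hw : 0 < w) (h : w * exp w = x) :
    log x = w + log w := by
  rw [← h, log_mul hw.ne' (exp_pos w).ne', log_exp, add_comm]

theorem log_div_two_le_of_mul_exp_eq (hw : 0 < w) (h : w * exp w = x) : log x / 2 ≤ w := by
  have := log_le_sub_one_of_pos hw
  rw [log_eq_add_log_of_mul_exp_eq hw h]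
  linarith

theorem sub_log_add_log_log_of_mul_exp_eq (hw : 1 ≤ w) (h : w * exp w = x) :
    w - log x + log (log x) = log (1 + log w / w) := by
  have hw0 : 0 < w := one_pos.trans_le hw
  have hx : log x = w + log w := log_eq_add_log_of_mul_exp_eq hw0 h
  have hlogx : log x ≠ 0 := by
    rw [hx]
    exact (add_pos_of_pos_of_nonneg hw0 (log_nonneg hw)).ne'
  have hratio : 1 + log w / w = log x / w := by
    rw [hx]
    field_simp
  rw [hratio, log_div hlogx hw0.ne', hx]
  ring

end MulExpEq

theorem tendsto_log_one_add_log_div_self_atTop :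
    Tendsto (fun w => log (1 + log w / w)) atTop (nhds 0) := by
  have hratio : Tendsto (fun w => 1 + log w / w) atTop (nhds 1) := by
    simpa using tendsto_const_nhds.add isLittleO_log_id_atTop.tendsto_div_nhds_zero
  simpa [Function.comp_def] using (continuousAt_log one_ne_zero).tendsto.comp hratio

theorem lambertW_asymptotic (W : ℝ → ℝ)
    (hW : ∀ x : ℝ, 0 < x → 0 < W x ∧ W x * Real.exp (W x) = x) :
    Filter.Tendsto (fun k : ℝ => W k - Real.log k + Real.log (Real.log k))
      Filter.atTop (nhds 0) := by
  have hW_atTop : Tendsto W atTop atTop := by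
    refine tendsto_atTop_mono' atTop ?_ (tendsto_log_atTop.atTop_div_const two_pos)
    filter_upwards [eventually_gt_atTop 0] with x hx
    exact log_div_two_le_of_mul_exp_eq (hW x hx).1 (hW x hx).2
  refine (tendsto_log_one_add_log_div_self_atTop.comp hW_atTop).congr' ?_
  filter_upwards [hW_atTop.eventually_ge_atTop 1, eventually_gt_atTop 0] with x hW1 hx
  exact (sub_log_add_log_log_of_mul_exp_eq hW1 (hW x hx).2).symm
end

section
/- The logarithm of the ordered Bell numbers satisfies log a_k = k log k − (1 + L)k + O(log k), where L = log log 2. -/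
open Real Finset Filter

set_option linter.unusedSectionVars false

namespace FubiniAux

def fub : ℕ → ℕ
  | 0 => 1
  | n + 1 => ∑ j : Fin (n + 1), (n + 1).choose j * fub j
  termination_by n => n
  decreasing_by exact j.isLt

lemma fub_zero : fub 0 = 1 := by rw [fub]

lemma fub_succ (n : ℕ) : fub (n + 1) = ∑ j ∈ Finset.range (n + 1), (n + 1).choose j * fub j := by
  rw [fub, Finset.sum_range]

variable {α : Type*} [Fintype α] [DecidableEq α]

abbrev OP (s : Finset α) : Type _ :=
  {l : List (Finset α) // (∀ b ∈ l, b.Nonempty) ∧ l.Pairwise Disjoint ∧ l.foldr (· ∪ ·) ∅ = s}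

lemma subset_foldr {l : List (Finset α)} {b : Finset α} (hb : b ∈ l) :
    b ⊆ l.foldr (· ∪ ·) ∅ := by
  induction l with
  | nil => cases hb
  | cons a l ih =>
    rcases List.mem_cons.1 hb with h | h
    · subst h; exact Finset.subset_union_left
    · exact (ih h).trans Finset.subset_union_right

lemma disjoint_foldr {b : Finset α} {l : List (Finset α)} (h : ∀ c ∈ l, Disjoint b c) :
    Disjoint b (l.foldr (· ∪ ·) ∅) := by
  induction l with
  | nil => simp
  | cons a l ih =>
    simp only [List.foldr_cons, Finset.disjoint_union_right]
    exact ⟨h a List.mem_cons_self, ih fun c hc => h c (List.mem_cons_of_mem _ hc)⟩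

def g (s : Finset α) (x : Σ t : {t : Finset α // t ⊆ s ∧ t.Nonempty}, OP (s \ t.1)) : OP s :=
  ⟨x.1.1 :: x.2.1, by
    obtain ⟨⟨t, hts, htne⟩, ⟨l, h1, h2, h3⟩⟩ := x
    refine ⟨?_, ?_, ?_⟩
    · intro b hb
      rcases List.mem_cons.1 hb with h | h
      · subst h; exact htne
      · exact h1 b h
    · refine List.pairwise_cons.2 ⟨fun c hc => ?_, h2⟩
      have : c ⊆ s \ t := h3 ▸ subset_foldr hc
      exact (Finset.disjoint_sdiff).mono_right this
    · simp only [List.foldr_cons, h3]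
      exact Finset.union_sdiff_of_subset hts⟩

lemma g_bij (s : Finset α) (hs : s.Nonempty) : Function.Bijective (g s) := by
  constructor
  · rintro ⟨⟨t, ht⟩, ⟨l, hl⟩⟩ ⟨⟨t', ht'⟩, ⟨l', hl'⟩⟩ h
    have h' : t :: l = t' :: l' := congrArg Subtype.val h
    obtain ⟨rfl, rfl⟩ : t = t' ∧ l = l' := by
      exact ⟨(List.cons.injEq _ _ _ _ ▸ h').1, (List.cons.injEq _ _ _ _ ▸ h').2⟩
    rfl
  · rintro ⟨l, h1, h2, h3⟩
    cases l with
    | nil =>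
      exfalso
      simp only [List.foldr_nil] at h3
      exact hs.ne_empty h3.symm
    | cons b l' =>
      have hbsub : b ⊆ s := by
        have := subset_foldr (List.mem_cons_self (a := b) (l := l'))
        rwa [h3] at this
      have hbd : Disjoint b (l'.foldr (· ∪ ·) ∅) :=
        disjoint_foldr (List.pairwise_cons.1 h2).1
      have hfold : l'.foldr (· ∪ ·) ∅ = s \ b := by
        have hu : b ∪ l'.foldr (· ∪ ·) ∅ = s := h3
        rw [← hu, Finset.union_sdiff_cancel_left hbd]
      refine ⟨⟨⟨b, hbsub, h1 b (List.mem_cons_self (a := b) (l := l'))⟩,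
        ⟨l', fun c hc => h1 c (List.mem_cons_of_mem _ hc), (List.pairwise_cons.1 h2).2, hfold⟩⟩, ?_⟩
      rfl



lemma sum_choose_fub (n : ℕ) (hn : 1 ≤ n) :
    ∑ j ∈ Finset.range (n + 1), n.choose j * fub (n - j) = fub n + fub n := by
  have h1 : ∑ j ∈ Finset.range (n + 1), n.choose j * fub (n - j)
      = ∑ j ∈ Finset.range (n + 1), n.choose j * fub j := by
    rw [← Finset.sum_range_reflect]
    refine Finset.sum_congr rfl fun j hj => ?_
    rw [Finset.mem_range, Nat.lt_succ_iff] at hj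
    have e1 : n + 1 - 1 - j = n - j := by omega
    rw [e1, Nat.choose_symm hj, Nat.sub_sub_self hj]
  rw [h1, Finset.sum_range_succ, Nat.choose_self, one_mul]
  obtain ⟨m, rfl⟩ : ∃ m, n = m + 1 := ⟨n - 1, by omega⟩
  rw [← fub_succ]

variable {α : Type*} [Fintype α] [DecidableEq α]

theorem OP_card (s : Finset α) : Finite (OP s) ∧ Nat.card (OP s) = fub s.card := by
  induction s using Finset.strongInduction with
  | _ s ih =>
  rcases s.eq_empty_or_nonempty with rfl | hs
  · have key : ∀ y : OP (∅ : Finset α), y = ⟨[], by simp⟩ := by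
      rintro ⟨l, h1, h2, h3⟩
      cases l with
      | nil => rfl
      | cons b l' =>
        exfalso
        have hb : b ⊆ (∅ : Finset α) := by
          have := subset_foldr (List.mem_cons_self (a := b) (l := l'))
          rwa [h3] at this
        exact (h1 b (List.mem_cons_self (a := b) (l := l'))).ne_empty (Finset.subset_empty.1 hb)
    haveI : Subsingleton (OP (∅ : Finset α)) := ⟨fun a b => (key a).trans (key b).symm⟩
    haveI : Nonempty (OP (∅ : Finset α)) := ⟨⟨[], by simp⟩⟩
    refine ⟨Finite.of_subsingleton, ?_⟩
    rw [Nat.card_unique, Finset.card_empty, fub_zero]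
  · haveI hfin : ∀ t : {t : Finset α // t ⊆ s ∧ t.Nonempty}, Finite (OP (s \ t.1)) :=
      fun t => (ih _ (Finset.sdiff_ssubset t.2.1 t.2.2)).1
    haveI hfinS : Finite (Σ t : {t : Finset α // t ⊆ s ∧ t.Nonempty}, OP (s \ t.1)) :=
      inferInstance
    have hb := g_bij s hs
    have hFin : Finite (OP s) := Finite.of_surjective (g s) hb.2
    refine ⟨hFin, ?_⟩
    have hcard : Nat.card (OP s) =
        Nat.card (Σ t : {t : Finset α // t ⊆ s ∧ t.Nonempty}, OP (s \ t.1)) :=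
      (Nat.card_eq_of_bijective _ hb).symm
    haveI : ∀ t : {t : Finset α // t ⊆ s ∧ t.Nonempty}, Fintype (OP (s \ t.1)) :=
      fun t => Fintype.ofFinite _
    haveI : Fintype {t : Finset α // t ⊆ s ∧ t.Nonempty} := Fintype.ofFinite _
    rw [hcard, Nat.card_eq_fintype_card, Fintype.card_sigma]
    have hval : ∀ t : {t : Finset α // t ⊆ s ∧ t.Nonempty},
        Fintype.card (OP (s \ t.1)) = fub (s.card - t.1.card) := by
      intro t
      rw [← Nat.card_eq_fintype_card, (ih _ (Finset.sdiff_ssubset t.2.1 t.2.2)).2,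
        Finset.card_sdiff_of_subset t.2.1]
    rw [Finset.sum_congr rfl fun t _ => hval t]
    -- now : ∑ t : subtype, fub (s.card - t.1.card) = fub s.card
    have hsub : ∑ t : {t : Finset α // t ⊆ s ∧ t.Nonempty}, fub (s.card - t.1.card)
        = ∑ t ∈ s.powerset.filter (fun t => t.Nonempty), fub (s.card - t.card) := by
      rw [Finset.sum_subtype (p := fun t => t ⊆ s ∧ t.Nonempty)
        (s.powerset.filter (fun t => t.Nonempty))
        (fun t => by simp [Finset.mem_filter, Finset.mem_powerset]) (fun t => fub (s.card - t.card))]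
    rw [hsub]
    have hsplit := Finset.sum_filter_add_sum_filter_not s.powerset (fun t => t.Nonempty)
      (fun t => fub (s.card - t.card))
    have hneg : s.powerset.filter (fun t => ¬ t.Nonempty) = {∅} := by
      ext t
      simp [Finset.not_nonempty_iff_eq_empty, Finset.mem_powerset]
      rintro rfl; exact Finset.empty_subset s
    have hpow : ∑ t ∈ s.powerset, fub (s.card - t.card) = fub s.card + fub s.card := by
      rw [Finset.sum_powerset_apply_card (fun m => fub (s.card - m))]
      simp only [smul_eq_mul]
      exact sum_choose_fub s.card (Finset.card_pos.2 hs)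
    rw [hneg] at hsplit
    simp only [Finset.sum_singleton, Finset.card_empty, Nat.sub_zero] at hsplit
    omega



noncomputable def c : ℝ := Real.log 2
noncomputable def r : ℝ := c⁻¹

lemma c_pos : 0 < c := Real.log_pos (by norm_num)
lemma c_le_one : c ≤ 1 := by
  have h := Real.log_le_sub_one_of_pos (by norm_num : (0:ℝ) < 2)
  rw [c]; linarith
lemma r_pos : 0 < r := inv_pos.2 c_pos
lemma c_mul_r : c * r = 1 := mul_inv_cancel₀ c_pos.ne'
lemma exp_c : Real.exp c = 2 := Real.exp_log (by norm_num)

noncomputable def P (m : ℕ) : ℝ := ∑ i ∈ Finset.range m, c ^ i / i.factorial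

lemma P_le_two (m : ℕ) : P m ≤ 2 := by
  have := Real.sum_le_exp_of_nonneg c_pos.le m
  rwa [exp_c] at this

lemma two_sub_P_le (m : ℕ) :
    2 - P (m + 1) ≤ c ^ (m + 1) * ((m + 2) / ((m + 1).factorial * (m + 1))) := by
  have habs : |c| ≤ 1 := by rw [abs_of_pos c_pos]; exact c_le_one
  have h := Real.exp_bound habs (Nat.succ_pos m)
  rw [exp_c, abs_of_pos c_pos] at h
  have h2 := (abs_sub_le_iff.1 h).1
  calc 2 - P (m + 1) ≤ c ^ (m + 1) * (↑(m + 1).succ / ((m + 1).factorial * (m + 1))) := by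
        simpa [P] using h2
    _ = c ^ (m + 1) * ((m + 2) / ((m + 1).factorial * (m + 1))) := by push_cast; ring_nf

noncomputable def S (n : ℕ) : ℝ := ∑ j ∈ Finset.range n, c ^ (n - j) / (n - j).factorial

lemma S_eq (n : ℕ) : S n = P (n + 1) - 1 := by
  have h1 : S n = ∑ j ∈ Finset.range n, c ^ (j + 1) / (j + 1).factorial := by
    rw [S, ← Finset.sum_range_reflect]
    refine Finset.sum_congr rfl fun j hj => ?_
    rw [Finset.mem_range] at hj
    have : n - (n - 1 - j) = j + 1 := by omega
    rw [this]
  rw [h1]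
  have h2 := Finset.sum_range_succ' (fun i => c ^ i / (i.factorial : ℝ)) n
  simp only [pow_zero, Nat.factorial_zero, Nat.cast_one] at h2
  rw [P, h2]
  ring

lemma S_le_one (n : ℕ) : S n ≤ 1 := by
  have := P_le_two (n + 1)
  rw [S_eq]; linarith

lemma S_nonneg (n : ℕ) : 0 ≤ S n :=
  Finset.sum_nonneg fun j _ => div_nonneg (pow_nonneg c_pos.le _) (Nat.cast_nonneg _)

-- termwise identity
lemma term_eq {n j : ℕ} (hj : j ≤ n) :
    (n.choose j : ℝ) * (j.factorial * r ^ j)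
      = n.factorial * r ^ n * (c ^ (n - j) / (n - j).factorial) := by
  have hch : (n.choose j * j.factorial * (n - j).factorial : ℕ) = n.factorial :=
    Nat.choose_mul_factorial_mul_factorial hj
  have hch' : (n.choose j : ℝ) * j.factorial * (n - j).factorial = n.factorial := by
    exact_mod_cast hch
  have hr : r ^ j = c ^ (n - j) * r ^ n := by
    have : r ^ n = r ^ j * r ^ (n - j) := by rw [← pow_add]; congr 1; omega
    rw [this]
    have : c ^ (n - j) * (r ^ j * r ^ (n - j))
        = r ^ j * ((c * r) ^ (n - j)) := by rw [mul_pow]; ring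
    rw [this, c_mul_r, one_pow, mul_one]
  have hfne : ((n - j).factorial : ℝ) ≠ 0 := by positivity
  have key : (n.choose j : ℝ) * j.factorial = n.factorial / (n - j).factorial := by
    rw [eq_div_iff hfne]; exact hch'
  have expand : (n.choose j : ℝ) * (j.factorial * (c ^ (n-j) * r ^ n))
      = ((n.choose j : ℝ) * j.factorial) * c ^ (n-j) * r ^ n := by ring
  rw [hr, expand, key]; ring

theorem fub_le (n : ℕ) : (fub n : ℝ) ≤ n.factorial * r ^ n := by
  induction n using Nat.strong_induction_on with
  | _ n ih =>
  match n with
  | 0 => simp [fub_zero]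
  | m + 1 =>
    have hsum : (fub (m + 1) : ℝ)
        = ∑ j ∈ Finset.range (m + 1), ((m + 1).choose j : ℝ) * fub j := by
      rw [fub_succ]; push_cast; rfl
    rw [hsum]
    calc ∑ j ∈ Finset.range (m + 1), ((m + 1).choose j : ℝ) * fub j
        ≤ ∑ j ∈ Finset.range (m + 1), ((m + 1).choose j : ℝ) * (j.factorial * r ^ j) := by
          refine Finset.sum_le_sum fun j hj => ?_
          exact mul_le_mul_of_nonneg_left (ih j (Finset.mem_range.1 hj)) (Nat.cast_nonneg _)
      _ = ∑ j ∈ Finset.range (m + 1),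
            (m + 1).factorial * r ^ (m + 1) * (c ^ (m + 1 - j) / (m + 1 - j).factorial) := by
          refine Finset.sum_congr rfl fun j hj => ?_
          exact term_eq (le_of_lt (Finset.mem_range.1 hj))
      _ = (m + 1).factorial * r ^ (m + 1) * S (m + 1) := by
          rw [S, Finset.mul_sum]
      _ ≤ (m + 1).factorial * r ^ (m + 1) * 1 := by
          exact mul_le_mul_of_nonneg_left (S_le_one _)
            (mul_nonneg (Nat.cast_nonneg _) (pow_nonneg r_pos.le _))
      _ = (m + 1).factorial * r ^ (m + 1) := mul_one _


noncomputable def W (n : ℕ) : ℝ :=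
  ∑ j ∈ Finset.range n, c ^ (n - j) / ((n - j).factorial * (j + 1))

lemma tail_le (n : ℕ) (hn : 1 ≤ n) :
    c ^ (n + 1) * ((n + 2) / ((n + 1).factorial * (n + 1))) ≤ c / n := by
  have hcpow : c ^ (n + 1) ≤ c := by
    calc c ^ (n + 1) = c * c ^ n := by ring
      _ ≤ c * 1 := by
          exact mul_le_mul_of_nonneg_left (pow_le_one₀ c_pos.le c_le_one) c_pos.le
      _ = c := mul_one c
  have hnat : (n : ℝ) * (n + 2) ≤ (n + 1).factorial * (n + 1) := by
    have h1 : (n:ℝ) * ((n:ℝ) + 2) ≤ ((n:ℝ) + 1) * ((n:ℝ) + 1) := by nlinarith [sq_nonneg ((n:ℝ) - 1)]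
    have h2 : ((n + 1 : ℕ) : ℝ) ≤ ((n + 1).factorial : ℝ) := by
      exact_mod_cast Nat.self_le_factorial (n + 1)
    calc (n : ℝ) * (n + 2) ≤ (n + 1) * (n + 1) := h1
      _ ≤ (n + 1).factorial * (n + 1) := by
          refine mul_le_mul_of_nonneg_right ?_ (by positivity)
          exact_mod_cast h2
  have hn' : (0:ℝ) < n := by exact_mod_cast hn
  have hfac : (0:ℝ) < ((n + 1).factorial : ℝ) * (n + 1) := by positivity
  have hdiv : ((n:ℝ) + 2) / ((n + 1).factorial * (n + 1)) ≤ 1 / n := by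
    rw [div_le_div_iff₀ hfac hn']
    nlinarith [hnat]
  calc c ^ (n + 1) * ((n + 2) / ((n + 1).factorial * (n + 1)))
      ≤ c * (1 / n) := by
        refine mul_le_mul hcpow hdiv (by positivity) c_pos.le
    _ = c / n := by ring

lemma W_key (n : ℕ) (hn : 1 ≤ n) : 1 ≤ ((n : ℝ) + 1) * W n := by
  obtain ⟨m, rfl⟩ : ∃ m, n = m + 1 := ⟨n - 1, by omega⟩
  set N := m + 1 with hN
  have hsplit : W N = (∑ j ∈ Finset.range m, c ^ (N - j) / ((N - j).factorial * (j + 1)))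
      + c / N := by
    rw [W, Finset.sum_range_succ]
    congr 1
    have h1 : N - m = 1 := by omega
    rw [h1, hN]
    push_cast [Nat.factorial_one]
    ring
  have hSsplit : (∑ j ∈ Finset.range m, c ^ (N - j) / ((N - j).factorial : ℝ)) = S N - c := by
    have := Finset.sum_range_succ (fun j => c ^ (N - j) / ((N - j).factorial : ℝ)) m
    have h1 : N - m = 1 := by omega
    rw [S]
    rw [this, h1] at *
    simp [Nat.factorial_one]
  have hterm : ∀ j ∈ Finset.range m,
      c ^ (N - j) / ((N - j).factorial : ℝ) / (N + 1) ≤ c ^ (N - j) / ((N - j).factorial * (j + 1)) := by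
    intro j hj
    rw [Finset.mem_range] at hj
    rw [div_div]
    apply div_le_div_of_nonneg_left (pow_nonneg c_pos.le _) (by positivity)
    have : (j : ℝ) + 1 ≤ N + 1 := by
      have : (j:ℝ) ≤ N := by exact_mod_cast (by omega : j ≤ N)
      linarith
    exact mul_le_mul_of_nonneg_left this (by positivity) |>.trans_eq rfl
  have hWge : (S N - c) / (N + 1) + c / N ≤ W N := by
    rw [hsplit]
    have : (S N - c) / (N + 1) ≤ ∑ j ∈ Finset.range m, c ^ (N - j) / ((N - j).factorial * (j + 1)) := by
      rw [← hSsplit, Finset.sum_div]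
      exact Finset.sum_le_sum hterm
    linarith
  have hSc : 1 ≤ S N + c / N := by
    have h1 := two_sub_P_le N
    have h2 := S_eq N
    have h3 := tail_le N (by omega)
    have h4 : 1 - S N ≤ c / N := by rw [h2]; linarith [h1.trans h3]
    linarith
  have hNpos : (0:ℝ) < (N:ℝ) + 1 := by positivity
  have hN0 : (0:ℝ) < (N:ℝ) := by exact_mod_cast (by omega : 0 < N)
  have hexp : ((N:ℝ) + 1) * ((S N - c) / (N + 1) + c / N) = S N + c / N := by
    field_simp
    ring
  calc (1:ℝ) ≤ S N + c / N := hSc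
    _ = ((N:ℝ) + 1) * ((S N - c) / (N + 1) + c / N) := hexp.symm
    _ ≤ ((N:ℝ) + 1) * W N := mul_le_mul_of_nonneg_left hWge hNpos.le


theorem le_fub (n : ℕ) : (n.factorial : ℝ) * r ^ n ≤ ((n : ℝ) + 1) * fub n := by
  induction n using Nat.strong_induction_on with
  | _ n ih =>
  match n with
  | 0 => simp [fub_zero]
  | m + 1 =>
    set N := m + 1 with hN
    have hsum : (fub N : ℝ) = ∑ j ∈ Finset.range N, (N.choose j : ℝ) * fub j := by
      rw [hN, fub_succ]; push_cast; rfl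
    have step1 : ∑ j ∈ Finset.range N, (N.choose j : ℝ) * (j.factorial * r ^ j / (j + 1))
        ≤ ∑ j ∈ Finset.range N, (N.choose j : ℝ) * fub j := by
      refine Finset.sum_le_sum fun j hj => ?_
      refine mul_le_mul_of_nonneg_left ?_ (Nat.cast_nonneg _)
      rw [div_le_iff₀ (by positivity)]
      calc (j.factorial : ℝ) * r ^ j ≤ ((j:ℝ) + 1) * fub j := ih j (Finset.mem_range.1 hj)
        _ = (fub j : ℝ) * ((j:ℝ) + 1) := by ring
    have step2 : ∑ j ∈ Finset.range N, (N.choose j : ℝ) * (j.factorial * r ^ j / (j + 1))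
        = (N.factorial : ℝ) * r ^ N * W N := by
      rw [W, Finset.mul_sum]
      refine Finset.sum_congr rfl fun j hj => ?_
      rw [Finset.mem_range] at hj
      have h1 : (N.choose j : ℝ) * (j.factorial * r ^ j / (j + 1))
          = (N.choose j : ℝ) * (j.factorial * r ^ j) / (j + 1) := by ring
      rw [h1, term_eq hj.le]
      field_simp
    have hW := W_key N (by omega)
    calc (N.factorial : ℝ) * r ^ N
        = (N.factorial : ℝ) * r ^ N * 1 := (mul_one _).symm
      _ ≤ (N.factorial : ℝ) * r ^ N * (((N:ℝ) + 1) * W N) := by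
          refine mul_le_mul_of_nonneg_left hW ?_
          exact mul_nonneg (Nat.cast_nonneg _) (pow_nonneg r_pos.le _)
      _ = ((N:ℝ) + 1) * ((N.factorial : ℝ) * r ^ N * W N) := by ring
      _ = ((N:ℝ) + 1) * ∑ j ∈ Finset.range N, (N.choose j : ℝ) * (j.factorial * r ^ j / (j + 1)) := by
          rw [step2]
      _ ≤ ((N:ℝ) + 1) * ∑ j ∈ Finset.range N, (N.choose j : ℝ) * fub j := by
          refine mul_le_mul_of_nonneg_left step1 (by positivity)
      _ = ((N:ℝ) + 1) * fub N := by rw [hsum]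


lemma pow_self_le (k : ℕ) (hk : 1 ≤ k) : ((k:ℝ)) ^ k ≤ k.factorial * Real.exp k := by
  have hterm : ((k:ℝ)) ^ k / k.factorial ≤ Real.exp k := by
    calc ((k:ℝ)) ^ k / k.factorial
        ≤ ∑ i ∈ Finset.range (k + 1), (k:ℝ) ^ i / i.factorial := by
          refine Finset.single_le_sum (f := fun i => (k:ℝ) ^ i / (i.factorial : ℝ))
            (fun i _ => by positivity) (Finset.self_mem_range_succ k)
      _ ≤ Real.exp k := Real.sum_le_exp_of_nonneg (Nat.cast_nonneg k) _
  have hf : (0:ℝ) < k.factorial := by positivity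
  calc ((k:ℝ)) ^ k = ((k:ℝ)) ^ k / k.factorial * k.factorial := by field_simp
    _ ≤ Real.exp k * k.factorial := by
        exact mul_le_mul_of_nonneg_right hterm hf.le
    _ = k.factorial * Real.exp k := mul_comm _ _

lemma log_factorial_ge (k : ℕ) (hk : 1 ≤ k) :
    (k:ℝ) * Real.log k - k ≤ Real.log (k.factorial) := by
  have h := pow_self_le k hk
  have hkpos : (0:ℝ) < k := by exact_mod_cast hk
  have hpow : (0:ℝ) < (k:ℝ) ^ k := by positivity
  have := Real.log_le_log hpow h
  rw [Real.log_pow, Real.log_mul (by positivity) (Real.exp_pos _).ne', Real.log_exp] at this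
  linarith

lemma exp_mul_pow_le (k : ℕ) (hk : 1 ≤ k) :
    (k.factorial : ℝ) * Real.exp k ≤ Real.exp 1 * (k:ℝ) ^ (k + 1) := by
  induction k, hk using Nat.le_induction with
  | base => norm_num [Nat.factorial_one]
  | succ k hk ih =>
    have hkpos : (0:ℝ) < k := by exact_mod_cast hk
    have key : Real.exp 1 * (k:ℝ) ^ (k + 1) ≤ ((k:ℝ) + 1) ^ (k + 1) := by
      have hx : (0:ℝ) < ((k:ℝ) + 1) / k := by positivity
      have hlog : (1:ℝ) / ((k:ℝ) + 1) ≤ Real.log (((k:ℝ) + 1) / k) := by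
        have h2 := Real.log_le_sub_one_of_pos (show (0:ℝ) < (k:ℝ) / (k + 1) by positivity)
        have h3 : Real.log ((k:ℝ) / (k + 1)) = - Real.log (((k:ℝ) + 1) / k) := by
          rw [← Real.log_inv]
          congr 1
          field_simp
        have h4 : (k:ℝ) / (k + 1) - 1 = - (1 / ((k:ℝ) + 1)) := by field_simp; ring
        rw [h3, h4] at h2
        linarith
      have hexp : Real.exp 1 ≤ (((k:ℝ) + 1) / k) ^ (k + 1) := by
        have : Real.exp 1 ≤ Real.exp (((k:ℝ) + 1) * Real.log (((k:ℝ) + 1) / k)) := by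
          apply Real.exp_le_exp.2
          calc (1:ℝ) = ((k:ℝ) + 1) * (1 / ((k:ℝ) + 1)) := by field_simp
            _ ≤ ((k:ℝ) + 1) * Real.log (((k:ℝ) + 1) / k) := by
                exact mul_le_mul_of_nonneg_left hlog (by positivity)
        rwa [show ((k:ℝ) + 1) * Real.log (((k:ℝ) + 1) / k) = (k + 1 : ℕ) * Real.log (((k:ℝ) + 1) / k)
              by push_cast; ring,
          ← Real.log_pow, Real.exp_log (by positivity)] at this
      calc Real.exp 1 * (k:ℝ) ^ (k + 1)
          ≤ (((k:ℝ) + 1) / k) ^ (k + 1) * (k:ℝ) ^ (k + 1) := by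
            exact mul_le_mul_of_nonneg_right hexp (by positivity)
        _ = ((k:ℝ) + 1) ^ (k + 1) := by
            rw [div_pow, div_mul_eq_mul_div, mul_div_assoc]
            field_simp
    have hstep : ((k + 1).factorial : ℝ) * Real.exp (k + 1)
        = ((k:ℝ) + 1) * Real.exp 1 * ((k.factorial : ℝ) * Real.exp k) := by
      rw [Nat.factorial_succ]
      push_cast
      rw [Real.exp_add]
      ring
    have hcast : Real.exp ((k + 1 : ℕ) : ℝ) = Real.exp ((k:ℝ) + 1) := by push_cast; ring_nf
    calc ((k + 1).factorial : ℝ) * Real.exp ((k + 1 : ℕ) : ℝ)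
        = ((k:ℝ) + 1) * Real.exp 1 * ((k.factorial : ℝ) * Real.exp k) := by
          rw [hcast, hstep]
      _ ≤ ((k:ℝ) + 1) * Real.exp 1 * (Real.exp 1 * (k:ℝ) ^ (k + 1)) := by
          refine mul_le_mul_of_nonneg_left ih ?_
          positivity
      _ = ((k:ℝ) + 1) * Real.exp 1 * (Real.exp 1 * (k:ℝ) ^ (k + 1)) := rfl
      _ ≤ ((k:ℝ) + 1) * Real.exp 1 * (((k:ℝ) + 1) ^ (k + 1)) := by
          refine mul_le_mul_of_nonneg_left key (by positivity)
      _ = Real.exp 1 * ((k:ℝ) + 1) ^ (k + 1 + 1) := by ring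
      _ = Real.exp 1 * (((k:ℕ) + 1 : ℕ) : ℝ) ^ (k + 1 + 1) := by push_cast; ring

lemma log_factorial_le (k : ℕ) (hk : 1 ≤ k) :
    Real.log (k.factorial) ≤ (k:ℝ) * Real.log k - k + 1 + Real.log k := by
  have h := exp_mul_pow_le k hk
  have hkpos : (0:ℝ) < k := by exact_mod_cast hk
  have hfpos : (0:ℝ) < (k.factorial : ℝ) := by positivity
  have hlog := Real.log_le_log (by positivity) h
  rw [Real.log_mul hfpos.ne' (Real.exp_pos _).ne', Real.log_exp,
    Real.log_mul (Real.exp_pos _).ne' (by positivity), Real.log_exp, Real.log_pow] at hlog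
  push_cast at hlog
  linarith



lemma fubini_eq (k : ℕ) : fubini k = fub k := by
  have h : fubini k = Nat.card (OP (Finset.univ : Finset (Fin k))) := rfl
  rw [h, (OP_card _).2, Finset.card_univ, Fintype.card_fin]

end FubiniAux

open FubiniAux in
theorem log_fubini_asymptotic :
    ∃ C : ℝ, ∀ k : ℕ, 2 ≤ k →
      |Real.log (fubini k) -
        ((k : ℝ) * Real.log k - (1 + Real.log (Real.log 2)) * k)| ≤ C * Real.log k := by
  refine ⟨3, fun k hk => ?_⟩
  have hk1 : (1:ℝ) ≤ (k:ℝ) := by exact_mod_cast (by omega : 1 ≤ k)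
  have hk2 : (2:ℝ) ≤ (k:ℝ) := by exact_mod_cast hk
  have hkpos : (0:ℝ) < (k:ℝ) := by linarith
  have hlogk : 0 < Real.log k := Real.log_pos (by linarith)
  have hlogk2 : Real.log 2 ≤ Real.log k := Real.log_le_log (by norm_num) hk2
  have h2 : (0.6931471803:ℝ) < Real.log 2 := Real.log_two_gt_d9
  have hone : (1:ℝ) ≤ 2 * Real.log k := by linarith
  -- bounds on fub k
  have hub := fub_le k
  have hlb := le_fub k
  have hfacpos : (0:ℝ) < (k.factorial : ℝ) := by positivity
  have hrk : (0:ℝ) < r ^ k := pow_pos r_pos k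
  have hfpos : (0:ℝ) < (fub k : ℝ) := by
    nlinarith [hlb, mul_pos hfacpos hrk]
  have hA1 := log_factorial_ge k (by omega)
  have hA2 := log_factorial_le k (by omega)
  set A := Real.log (k.factorial : ℝ) with hA
  have hlogub : Real.log (fub k) ≤ A - (k:ℝ) * Real.log (Real.log 2) := by
    have := Real.log_le_log hfpos hub
    rw [Real.log_mul hfacpos.ne' hrk.ne', Real.log_pow, r, Real.log_inv, c] at this
    rw [hA]
    push_cast at this ⊢
    linarith
  have hloglb : A - (k:ℝ) * Real.log (Real.log 2) - Real.log ((k:ℝ) + 1)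
      ≤ Real.log (fub k) := by
    have h1 := Real.log_le_log (mul_pos hfacpos hrk) hlb
    rw [Real.log_mul hfacpos.ne' hrk.ne', Real.log_pow, r, Real.log_inv, c,
      Real.log_mul (by positivity) hfpos.ne'] at h1
    rw [hA]
    push_cast at h1 ⊢
    linarith
  have hk1log : Real.log ((k:ℝ) + 1) ≤ 2 * Real.log k := by
    have hle : (k:ℝ) + 1 ≤ (k:ℝ) ^ 2 := by nlinarith
    calc Real.log ((k:ℝ) + 1) ≤ Real.log ((k:ℝ) ^ 2) := Real.log_le_log (by positivity) hle
      _ = 2 * Real.log k := by rw [Real.log_pow]; push_cast; ring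
  rw [fubini_eq k]
  rw [abs_le]
  constructor
  · have : -(3 * Real.log k) ≤ A - (k:ℝ) * Real.log (Real.log 2) - Real.log ((k:ℝ) + 1)
        - ((k:ℝ) * Real.log k - (1 + Real.log (Real.log 2)) * k) := by
      have expand : A - (k:ℝ) * Real.log (Real.log 2) - Real.log ((k:ℝ) + 1)
          - ((k:ℝ) * Real.log k - (1 + Real.log (Real.log 2)) * k)
          = (A - ((k:ℝ) * Real.log k - k)) - Real.log ((k:ℝ) + 1) := by ring
      rw [expand]
      have h1 : 0 ≤ A - ((k:ℝ) * Real.log k - k) := by linarith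
      linarith
    linarith [hloglb]
  · have expand : A - (k:ℝ) * Real.log (Real.log 2)
        - ((k:ℝ) * Real.log k - (1 + Real.log (Real.log 2)) * k)
        = A - ((k:ℝ) * Real.log k - k) := by ring
    have h1 : A - ((k:ℝ) * Real.log k - k) ≤ 1 + Real.log k := by linarith
    have : Real.log (fub k) - ((k:ℝ) * Real.log k - (1 + Real.log (Real.log 2)) * k)
        ≤ 1 + Real.log k := by linarith [hlogub]
    linarith
end

section
/- For k with (log₂x)² ≤ k ≤ (log x)/(3 log log x) and k ≫ (log x)/(log log x)², one has B_k · π(x,k) ≪ x, i.e., the product of the k-th Bell number and the count of n ≤ x with exactly k distinct prime factors is O(x). -/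
open Real Finset Filter

/-!
Write `S(k, j)` for the number of partitions of a `k`-set into `j` blocks. Labelling the blocks
injects (partition, labelling) pairs into maps `Fin k → Fin j`, so `S(k, j) ≤ j ^ k / j !`.
Bounding `j ^ k ≤ k ! e^{tj} / t ^ k` and summing over `j` against the exponential series gives
`B_k ≤ k ! e^{e^t} / t ^ k`, and `t = log k` yields `B_k ≤ k ! e^k / (log k) ^ k`. Multiplying by
Pomerance's upper bound for `π(x, k)` with `ε = 1`, the factorials cancel and
`B_k π(x, k) ≤ (x / log x) (e² L₀ / log k) ^ k`. For `k ≫ log x / (log log x) ^ 2` one has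
`log k ≥ log log x - O(log log log x)`, so `L₀ = O(log log log x)` while `log k ≥ (log log x) / 2`;
hence `e² L₀ ≤ log k` for large `x`, and the product is at most `x`.
-/

open scoped Nat

namespace Finpartition

variable {α : Type*} [DecidableEq α]

theorem parts_eq_image_part {s : Finset α} (P : Finpartition s) : P.parts = s.image P.part := by
  ext t
  refine ⟨fun ht => ?_, fun ht => ?_⟩
  · obtain ⟨a, ha, rfl⟩ := P.part_surjOn ht
    exact mem_image_of_mem _ ha
  · obtain ⟨a, ha, rfl⟩ := mem_image.1 ht
    exact P.part_mem.2 ha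

variable [Fintype α]

theorem part_eq_filter_of_injective {β : Type*} [DecidableEq β] (P : Finpartition (univ : Finset α))
    {g : P.parts → β} (hg : g.Injective) (a : α) :
    P.part a = ({b | g ⟨P.part b, P.part_mem.2 (mem_univ b)⟩ =
      g ⟨P.part a, P.part_mem.2 (mem_univ a)⟩} : Finset α) := by
  ext b
  rw [P.mem_part_iff_part_eq_part (mem_univ b) (mem_univ a), mem_filter, hg.eq_iff]
  simp

theorem card_card_parts_eq_mul_factorial_le (j : ℕ) :
    Nat.card {P : Finpartition (univ : Finset α) // #P.parts = j} * j ! ≤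
      j ^ Fintype.card α := by
  classical
  let S := {P : Finpartition (univ : Finset α) // #P.parts = j}
  let label : (Σ P : S, P.1.parts ≃ Fin j) → α → Fin j :=
    fun P a => P.2 ⟨P.1.1.part a, P.1.1.part_mem.2 (mem_univ a)⟩
  have hlabel : label.Injective := by
    rintro ⟨⟨P, hP⟩, e⟩ ⟨⟨Q, hQ⟩, e'⟩ h
    have hlabel_eq : ∀ a, e ⟨P.part a, _⟩ = e' ⟨Q.part a, _⟩ := congrFun h
    have hpart : P.part = Q.part := funext fun a => by
      rw [P.part_eq_filter_of_injective e.injective, Q.part_eq_filter_of_injective e'.injective]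
      simp only [hlabel_eq]
    obtain rfl : P = Q := Finpartition.ext (by rw [parts_eq_image_part, parts_eq_image_part, hpart])
    refine Sigma.ext rfl (heq_of_eq (Equiv.ext fun ⟨t, ht⟩ => ?_))
    obtain ⟨a, -, rfl⟩ := P.part_surjOn ht
    exact hlabel_eq a
  have hlabellings (P : S) : Nat.card (P.1.parts ≃ Fin j) = j ! := by
    rw [Nat.card_eq_fintype_card,
      Fintype.card_equiv (Fintype.equivFinOfCardEq (by rw [Fintype.card_coe, P.2])),
      Fintype.card_coe, P.2]
  calc Nat.card S * j ! = Nat.card (Σ P : S, P.1.parts ≃ Fin j) := by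
        rw [Nat.card_sigma, sum_const_nat fun P _ => hlabellings P, Nat.card_eq_fintype_card,
          card_univ]
    _ ≤ Nat.card (α → Fin j) := Nat.card_le_card_of_injective label hlabel
    _ = j ^ Fintype.card α := by simp

theorem card_eq_sum_card_card_parts_eq :
    Nat.card (Finpartition (univ : Finset α)) =
      ∑ j ∈ range (Fintype.card α + 1),
        Nat.card {P : Finpartition (univ : Finset α) // #P.parts = j} := by
  classical
  rw [Nat.card_eq_fintype_card, ← card_univ, card_eq_sum_card_fiberwise (f := fun P => #P.parts)
    fun P _ => mem_range.2 (Nat.lt_succ_of_le (by simpa using P.card_parts_le_card))]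
  simp only [Nat.card_eq_fintype_card, Fintype.card_subtype]

end Finpartition

theorem pow_le_factorial_mul_exp_div_pow {t y : ℝ} (ht : 0 < t) (hy : 0 ≤ y) (k : ℕ) :
    y ^ k ≤ k ! * exp (t * y) / t ^ k := by
  have := pow_div_factorial_le_exp _ (mul_nonneg ht.le hy) k
  rw [div_le_iff₀ (by positivity)] at this
  rw [le_div_iff₀ (by positivity), ← mul_pow, mul_comm y, mul_comm (k ! : ℝ)]
  exact this

theorem bell_le_factorial_mul_exp_exp_div_pow (k : ℕ) {t : ℝ} (ht : 0 < t) :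
    (bell k : ℝ) ≤ k ! * exp (exp t) / t ^ k := by
  have hterm (j : ℕ) :
      (Nat.card {P : Finpartition (univ : Finset (Fin k)) // #P.parts = j} : ℝ) ≤
        k ! / t ^ k * (exp t ^ j / j !) := by
    have hcount :
        (Nat.card {P : Finpartition (univ : Finset (Fin k)) // #P.parts = j} : ℝ) * j ! ≤
          (j : ℝ) ^ k := by
      exact_mod_cast Fintype.card_fin k ▸ Finpartition.card_card_parts_eq_mul_factorial_le j
    rw [← le_div_iff₀ (by positivity)] at hcount
    calc _ ≤ (j : ℝ) ^ k / j ! := hcount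
      _ ≤ k ! * exp (t * j) / t ^ k / j ! := by
          gcongr; exact pow_le_factorial_mul_exp_div_pow ht j.cast_nonneg k
      _ = k ! / t ^ k * (exp t ^ j / j !) := by rw [mul_comm t, exp_nat_mul]; ring
  calc (bell k : ℝ)
      = ∑ j ∈ range (k + 1),
          (Nat.card {P : Finpartition (univ : Finset (Fin k)) // #P.parts = j} : ℝ) := by
        rw [bell, Finpartition.card_eq_sum_card_card_parts_eq, Fintype.card_fin, Nat.cast_sum]
    _ ≤ ∑ j ∈ range (k + 1), k ! / t ^ k * (exp t ^ j / j !) := sum_le_sum fun j _ => hterm j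
    _ ≤ k ! / t ^ k * exp (exp t) := by
        rw [← mul_sum]; gcongr; exact sum_le_exp_of_nonneg (exp_nonneg t) _
    _ = k ! * exp (exp t) / t ^ k := by ring

theorem bell_mul_le_of_le_pomerance_bound {k n : ℕ} {x L₀ : ℝ} (hx : exp 1 ≤ x) (hL₀ : 0 < L₀)
    (hL₀k : exp 2 * L₀ ≤ log k) (hn : (n : ℝ) ≤ x / (k ! * log x) * exp (k * log L₀ + k)) :
    (bell k : ℝ) * n ≤ x := by
  have hx₀ : 0 < x := lt_of_lt_of_le (exp_pos 1) hx
  have hlx : 1 ≤ log x := (le_log_iff_exp_le hx₀).2 hx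
  have hlk : 0 < log k := lt_of_lt_of_le (by positivity) hL₀k
  have hk : (0 : ℝ) < k := Nat.cast_pos.2 (Nat.pos_of_ne_zero (by rintro rfl; simp at hlk))
  have hexp : exp (k * log L₀ + k) = L₀ ^ k * exp k := by rw [exp_add, exp_nat_mul, exp_log hL₀]
  have hexp2 : exp 2 ^ k = exp k * exp k := by rw [← exp_nat_mul, ← exp_add]; ring_nf
  calc (bell k : ℝ) * n
      ≤ k ! * exp (exp (log k)) / log k ^ k * (x / (k ! * log x) * exp (k * log L₀ + k)) :=
        mul_le_mul (bell_le_factorial_mul_exp_exp_div_pow k hlk) hn n.cast_nonneg (by positivity)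
    _ = x / log x * (exp 2 * L₀ / log k) ^ k := by
        rw [exp_log hk, hexp, div_pow, mul_pow, hexp2]
        field_simp
    _ ≤ x / log x * 1 := by
        gcongr
        exact pow_le_one₀ (by positivity) ((div_le_one hlk).2 hL₀k)
    _ ≤ x := by rw [mul_one]; exact div_le_self hx₀.le hlx

/-- The quantity `L₀` of Pomerance's estimate for `π(x, k)`. -/
noncomputable def pomeranceL₀ (x : ℝ) (k : ℕ) : ℝ := log (log x) - log k - log (log k)

theorem log_three_le_pomeranceL₀ {x : ℝ} {k : ℕ} (hx : exp 1 ≤ log x) (hk : 1 < k)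
    (hkx : (k : ℝ) ≤ log x / (3 * log (log x))) : log 3 ≤ pomeranceL₀ x k := by
  have hlx : 0 < log x := lt_of_lt_of_le (exp_pos 1) hx
  have hllx : 1 ≤ log (log x) := (le_log_iff_exp_le hlx).2 hx
  have hlk : 0 < log k := log_pos (by exact_mod_cast hk)
  have hlk_le : log k ≤ log (log x) - log 3 - log (log (log x)) := by
    have := log_le_log (by positivity) hkx
    rwa [log_div hlx.ne' (by positivity), log_mul (by norm_num) (by positivity), ← sub_sub] at this
  have hllk : log (log k) ≤ log (log (log x)) :=
    log_le_log hlk (by linarith [log_nonneg hllx, log_pos (by norm_num : (1:ℝ) < 3)])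
  unfold pomeranceL₀
  linarith

theorem exp_two_mul_pomeranceL₀_le {c x : ℝ} {k : ℕ} (hc : 0 < c) (hx : exp 1 ≤ log x)
    (hk : 3 ≤ k) (hkc : c * log x / log (log x) ^ 2 ≤ k)
    (hslack : exp 2 * (2 * log (log (log x)) - log c) ≤ log (log x) / 2) :
    exp 2 * pomeranceL₀ x k ≤ log k := by
  set f := 2 * log (log (log x)) - log c
  have hlx : 0 < log x := lt_of_lt_of_le (exp_pos 1) hx
  have hllx : 0 < log (log x) := lt_of_lt_of_le one_pos ((le_log_iff_exp_le hlx).2 hx)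
  have hlk : log (log x) - f ≤ log k := by
    have := log_le_log (by positivity) hkc
    rw [log_div (by positivity) (by positivity), log_mul hc.ne' hlx.ne', log_pow] at this
    push_cast at this
    linarith
  have hf : f ≤ log (log x) / 2 := by
    rcases lt_or_ge f 0 with h | h
    · linarith
    · exact le_trans (le_mul_of_one_le_left h (one_le_exp (by norm_num))) hslack
  have hllk : 0 ≤ log (log k) := by
    refine log_nonneg ((le_log_iff_exp_le (by positivity)).2 ?_)
    have : (3 : ℝ) ≤ k := by exact_mod_cast hk
    linarith [exp_one_lt_d9]
  unfold pomeranceL₀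
  calc exp 2 * (log (log x) - log k - log (log k)) ≤ exp 2 * f := by
        gcongr; linarith
    _ ≤ log k := by linarith

theorem eventually_exp_two_mul_two_log_sub_log_le (c : ℝ) :
    ∀ᶠ y in atTop, exp 2 * (2 * log y - log c) ≤ y / 2 := by
  have h : (fun y => exp 2 * (2 * log y - log c)) =o[atTop] id :=
    ((isLittleO_log_id_atTop.const_mul_left 2).sub
      (Asymptotics.isLittleO_const_id_atTop (log c))).const_mul_left (exp 2)
  filter_upwards [h.bound (by norm_num : (0:ℝ) < 1 / 2), eventually_ge_atTop 0] with y hy hy₀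
  rw [norm_eq_abs, id, norm_of_nonneg hy₀] at hy
  linarith [le_abs_self (exp 2 * (2 * log y - log c))]

theorem bell_piOmega_bounded
    (hpom : ∀ ε : ℝ, 0 < ε → ∃ X : ℝ, ∀ x : ℝ, X ≤ x → ∀ k : ℕ,
      Real.log (Real.log x) ^ 2 ≤ (k : ℝ) →
      (k : ℝ) ≤ Real.log x / (3 * Real.log (Real.log x)) →
      x / ((Nat.factorial k : ℝ) * Real.log x) *
          Real.exp ((k : ℝ) *
            Real.log (Real.log (Real.log x) - Real.log k - Real.log (Real.log k)) - ε * k) ≤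
        (piOmega x k : ℝ) ∧
      (piOmega x k : ℝ) ≤ x / ((Nat.factorial k : ℝ) * Real.log x) *
          Real.exp ((k : ℝ) *
            Real.log (Real.log (Real.log x) - Real.log k - Real.log (Real.log k)) + ε * k)) :
    ∀ c : ℝ, 0 < c → ∃ C : ℝ, ∃ X : ℝ, ∀ x : ℝ, X ≤ x → ∀ k : ℕ,
      Real.log (Real.log x) ^ 2 ≤ (k : ℝ) →
      (k : ℝ) ≤ Real.log x / (3 * Real.log (Real.log x)) →
      c * Real.log x / Real.log (Real.log x) ^ 2 ≤ (k : ℝ) →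
      (bell k : ℝ) * (piOmega x k : ℝ) ≤ C * x := by
  intro c hc
  obtain ⟨X₀, hX₀⟩ := hpom 1 one_pos
  have hlog := tendsto_log_atTop
  have hloglog := hlog.comp hlog
  obtain ⟨X, hX⟩ := eventually_atTop.1 <| (eventually_ge_atTop X₀).and <|
    (eventually_ge_atTop (exp 1)).and <| (hlog.eventually_ge_atTop (exp 2)).and <|
      hloglog.eventually (eventually_exp_two_mul_two_log_sub_log_le c)
  refine ⟨1, X, fun x hx k hk_lower hk_upper hkc => ?_⟩
  obtain ⟨hX₀x, hx_exp, hlx, hslack⟩ := hX x hx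
  have hllx : 2 ≤ log (log x) := (le_log_iff_exp_le (lt_of_lt_of_le (exp_pos 2) hlx)).2 hlx
  have hlx' : exp 1 ≤ log x := le_trans (exp_le_exp.2 one_le_two) hlx
  have hk : 3 ≤ k := by
    have : (4 : ℝ) ≤ k := le_trans (by nlinarith) hk_lower
    exact_mod_cast (by linarith : (3 : ℝ) ≤ k)
  rw [one_mul]
  refine bell_mul_le_of_le_pomerance_bound hx_exp
    (lt_of_lt_of_le (log_pos (by norm_num)) (log_three_le_pomeranceL₀ hlx' (by omega) hk_upper))
    (exp_two_mul_pomeranceL₀_le hc hlx' hk hkc hslack) ?_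
  simpa only [one_mul, pomeranceL₀] using (hX₀ x hX₀x k hk_lower hk_upper).2
end
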